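/- Let r be a power of 2 and suppose for every odd n > 0 we are given A_n ∈ t·(ℤ/2)[t²] satisfying A_{n+8r} = t^{8r}·A_n + t^{2r}·A_{n+2r}. Suppose further that whenever n < 8r², A_n is a sum of monomials t^m (m odd) such that the code (c,d) of each t^m precedes the code (a,b) of t^n in the order: (c,d) precedes (a,b) iff c+d < a+b, or c+d = a+b and d < b. Then this property holds for all odd n > 0. -/

import Mathlib

open Polynomial

/-- `(c,d)` strictly precedes `(a,b)` in the Nicolas–Serre order. -/
def prec (c d a b : ℕ) : Prop := c + d < a + b ∨ (c + d = a + b ∧ d < b)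

/-!
Write an odd exponent as `m = 2x + 1`. The function `g` is `spread`, which turns binary digits
into base-4 digits, so the code of `t^m` is `(unspread x, unspread (x / 2))`: the bits of `x` in
even and in odd positions. `prec` compares codes through the key `(c + d, d)` in `ℕ ×ₗ ℕ`, which is
additive. Adding `2^p` to a number below `2^p` adds exactly `codeKey (2^p)` to its key, and adding
it to any number adds at most that much, since carries only lower the key (for `p = 0, 1` this is a
check on one base-4 digit; dividing by 4 reduces `p` to `p - 2`).

In characteristic 2 the recurrence for `r` implies the same recurrence for every `s = 2^t ≥ r`.
For `n ≥ 8r`, choose `s` with `8s ≤ n < 16s`; then `A n = t^(8s) A (n - 8s) + t^(2s) A (n - 6s)`.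
The key of `x = n / 2` equals that of `(n - 8s) / 2` plus `codeKey (4s) = 2 codeKey s`, and is at
least that of `(n - 6s) / 2` plus `codeKey s`. The monomials of the two terms are shifted by at
most these amounts, so strong induction on `n` concludes.
-/

namespace NicolasSerre

def spread (n : ℕ) : ℕ := if n = 0 then 0 else 4 * spread (n / 2) + n % 2
decreasing_by omega

def unspread (x : ℕ) : ℕ := if x = 0 then 0 else x % 2 + 2 * unspread (x / 4)
decreasing_by omega

@[simp] lemma spread_zero : spread 0 = 0 := by rw [spread]; simp

@[simp] lemma unspread_zero : unspread 0 = 0 := by rw [unspread]; simp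

lemma spread_eq (n : ℕ) : spread n = 4 * spread (n / 2) + n % 2 := by
  rw [spread]; split_ifs with h <;> simp [h]

lemma unspread_eq (x : ℕ) : unspread x = x % 2 + 2 * unspread (x / 4) := by
  rw [unspread]; split_ifs with h <;> simp [h]

lemma spread_two_mul_add {k e : ℕ} (he : e < 2) : spread (2 * k + e) = 4 * spread k + e := by
  rw [spread_eq, show (2 * k + e) / 2 = k by omega, show (2 * k + e) % 2 = e by omega]

lemma eq_spread {g : ℕ → ℕ} (hg0 : g 0 = 0) (hge : ∀ n, g (2 * n) = 4 * g n)
    (hgo : ∀ n, g (2 * n + 1) = g (2 * n) + 1) : g = spread := by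
  funext n
  induction n using Nat.strong_induction_on with
  | _ n ih =>
    rcases Nat.eq_zero_or_pos n with rfl | hn
    · simp [hg0]
    obtain ⟨k, rfl | rfl⟩ := Nat.even_or_odd' n
    · rw [hge, ih k (by omega), ← add_zero (2 * k), spread_two_mul_add two_pos, add_zero]
    · rw [hgo, hge, ih k (by omega), spread_two_mul_add one_lt_two]

lemma unspread_spread_add_two_mul_spread (a b : ℕ) :
    unspread (spread a + 2 * spread b) = a := by
  induction h : a + b using Nat.strong_induction_on generalizing a b with
  | _ N ih =>
    rcases Nat.eq_zero_or_pos (a + b) with h0 | hpos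
    · obtain ⟨rfl, rfl⟩ : a = 0 ∧ b = 0 := by omega
      simp
    rw [unspread_eq, spread_eq a, spread_eq b,
      show (4 * spread (a / 2) + a % 2 + 2 * (4 * spread (b / 2) + b % 2)) / 4
        = spread (a / 2) + 2 * spread (b / 2) by omega,
      ih (a / 2 + b / 2) (by omega) (a / 2) (b / 2) rfl]
    omega

lemma unspread_half_spread_add_two_mul_spread (a b : ℕ) :
    unspread ((spread a + 2 * spread b) / 2) = b := by
  have h : (spread a + 2 * spread b) / 2 = spread b + 2 * spread (a / 2) := by
    rw [spread_eq a]; omega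
  rw [h, unspread_spread_add_two_mul_spread]

lemma spread_unspread_add_two_mul_spread_unspread (x : ℕ) :
    spread (unspread x) + 2 * spread (unspread (x / 2)) = x := by
  induction x using Nat.strong_induction_on with
  | _ x ih =>
    rcases Nat.eq_zero_or_pos x with rfl | hx
    · simp
    have h := ih (x / 4) (by omega)
    rw [show x / 4 / 2 = x / 8 by omega] at h
    rw [unspread_eq x, unspread_eq (x / 2), show x / 2 / 4 = x / 8 by omega,
      add_comm (x % 2), add_comm (x / 2 % 2), spread_two_mul_add (by omega),
      spread_two_mul_add (by omega)]
    omega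

def codeKey (x : ℕ) : ℕ ×ₗ ℕ := toLex (unspread x + unspread (x / 2), unspread (x / 2))

@[simp] lemma codeKey_zero : codeKey 0 = 0 := by simp [codeKey]

lemma prec_iff_codeKey_lt (x y : ℕ) :
    prec (unspread x) (unspread (x / 2)) (unspread y) (unspread (y / 2)) ↔
      codeKey x < codeKey y := by
  simp [codeKey, prec, Prod.Lex.toLex_lt_toLex]

lemma codeKey_of_lt_four {r : ℕ} (hr : r < 4) : codeKey r = toLex (r % 2 + r / 2, r / 2) := by
  rw [codeKey, unspread_eq, unspread_eq (r / 2), Nat.div_eq_of_lt hr,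
    Nat.div_eq_of_lt (by omega : r / 2 < 4)]
  simp only [unspread_zero, mul_zero, add_zero, Nat.mod_eq_of_lt (by omega : r / 2 < 2)]

lemma codeKey_eq_mod_add_div (x : ℕ) :
    codeKey x = codeKey (x % 4) + (codeKey (x / 4) + codeKey (x / 4)) := by
  rw [codeKey_of_lt_four (Nat.mod_lt x (by norm_num)), codeKey, codeKey, ← toLex_add,
    ← toLex_add, unspread_eq x, unspread_eq (x / 2), show x / 2 / 4 = x / 4 / 2 by omega]
  congr 1
  ext <;> simp only [Prod.fst_add, Prod.snd_add] <;> omega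

lemma codeKey_add_one_le (x : ℕ) : codeKey (x + 1) ≤ codeKey x + codeKey 1 := by
  induction x using Nat.strong_induction_on with
  | _ x ih =>
    rw [codeKey_eq_mod_add_div (x + 1), codeKey_eq_mod_add_div x]
    rcases (by omega : x % 4 < 3 ∨ x % 4 = 3) with h | h
    · rw [show (x + 1) / 4 = x / 4 by omega, show (x + 1) % 4 = x % 4 + 1 by omega]
      have hdigit : codeKey (x % 4 + 1) ≤ codeKey (x % 4) + codeKey 1 := by
        generalize x % 4 = r at h ⊢
        interval_cases r <;> simp (disch := omega) only [codeKey_of_lt_four] <;> decide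
      calc _ ≤ codeKey (x % 4) + codeKey 1 + (codeKey (x / 4) + codeKey (x / 4)) := by gcongr
        _ = _ := by abel
    · rw [show (x + 1) / 4 = x / 4 + 1 by omega, show (x + 1) % 4 = 0 by omega, h]
      have hq := ih (x / 4) (by omega)
      calc _ ≤ codeKey 0 + (codeKey (x / 4) + codeKey 1 + (codeKey (x / 4) + codeKey 1)) :=
            by gcongr
        _ = codeKey 0 + codeKey 1 + codeKey 1 + (codeKey (x / 4) + codeKey (x / 4)) := by abel
        _ ≤ codeKey 3 + codeKey 1 + (codeKey (x / 4) + codeKey (x / 4)) := by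
            gcongr
            simp (disch := omega) only [codeKey_of_lt_four]
            decide
        _ = _ := by abel

lemma codeKey_add_two_le (x : ℕ) : codeKey (x + 2) ≤ codeKey x + codeKey 2 := by
  rw [codeKey_eq_mod_add_div (x + 2), codeKey_eq_mod_add_div x]
  rcases (by omega : x % 4 < 2 ∨ 2 ≤ x % 4) with h | h
  · rw [show (x + 2) / 4 = x / 4 by omega, show (x + 2) % 4 = x % 4 + 2 by omega]
    have hdigit : codeKey (x % 4 + 2) ≤ codeKey (x % 4) + codeKey 2 := by
      generalize x % 4 = r at h ⊢
      interval_cases r <;> simp (disch := omega) only [codeKey_of_lt_four] <;> decide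
    calc _ ≤ codeKey (x % 4) + codeKey 2 + (codeKey (x / 4) + codeKey (x / 4)) := by gcongr
      _ = _ := by abel
  · rw [show (x + 2) / 4 = x / 4 + 1 by omega, show (x + 2) % 4 = x % 4 - 2 by omega]
    have hq := codeKey_add_one_le (x / 4)
    have hdigit :
        codeKey (x % 4 - 2) + codeKey 1 + codeKey 1 ≤ codeKey (x % 4) + codeKey 2 := by
      have : x % 4 < 4 := Nat.mod_lt x (by norm_num)
      generalize x % 4 = r at h this ⊢
      interval_cases r <;> simp (disch := omega) only [codeKey_of_lt_four] <;> decide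
    calc _ ≤ codeKey (x % 4 - 2) +
          (codeKey (x / 4) + codeKey 1 + (codeKey (x / 4) + codeKey 1)) := by gcongr
      _ = codeKey (x % 4 - 2) + codeKey 1 + codeKey 1 +
          (codeKey (x / 4) + codeKey (x / 4)) := by abel
      _ ≤ codeKey (x % 4) + codeKey 2 + (codeKey (x / 4) + codeKey (x / 4)) := by gcongr
      _ = _ := by abel

lemma codeKey_four_mul (m : ℕ) : codeKey (4 * m) = codeKey m + codeKey m := by
  rw [codeKey_eq_mod_add_div, Nat.mul_mod_right, Nat.mul_div_cancel_left m (by norm_num),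
    codeKey_zero, zero_add]

lemma codeKey_add_two_pow_le (p x : ℕ) : codeKey (x + 2 ^ p) ≤ codeKey x + codeKey (2 ^ p) := by
  induction p using Nat.twoStepInduction generalizing x with
  | zero => exact codeKey_add_one_le x
  | one => exact codeKey_add_two_le x
  | more p ih _ =>
    rw [show 2 ^ (p + 2) = 4 * 2 ^ p by ring]
    rw [codeKey_eq_mod_add_div (x + 4 * 2 ^ p), codeKey_eq_mod_add_div x, codeKey_four_mul,
      show (x + 4 * 2 ^ p) % 4 = x % 4 by omega, show (x + 4 * 2 ^ p) / 4 = x / 4 + 2 ^ p by omega]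
    calc _ ≤ codeKey (x % 4) + (codeKey (x / 4) + codeKey (2 ^ p) +
          (codeKey (x / 4) + codeKey (2 ^ p))) := by gcongr <;> exact ih _
      _ = _ := by abel

lemma codeKey_add_two_pow {p y : ℕ} (hy : y < 2 ^ p) :
    codeKey (y + 2 ^ p) = codeKey y + codeKey (2 ^ p) := by
  induction p using Nat.twoStepInduction generalizing y with
  | zero =>
    obtain rfl : y = 0 := by omega
    simp
  | one => interval_cases y <;> simp (disch := omega) only [codeKey_of_lt_four] <;> decide
  | more p ih _ =>
    rw [show 2 ^ (p + 2) = 4 * 2 ^ p by ring] at hy ⊢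
    rw [codeKey_eq_mod_add_div (y + 4 * 2 ^ p), codeKey_eq_mod_add_div y, codeKey_four_mul,
      show (y + 4 * 2 ^ p) % 4 = y % 4 by omega, show (y + 4 * 2 ^ p) / 4 = y / 4 + 2 ^ p by omega,
      ih (by omega)]
    abel

lemma codeKey_eq_sub_add {t x : ℕ} (hx : 4 * 2 ^ t ≤ x) (hx' : x < 8 * 2 ^ t) :
    codeKey x = codeKey (x - 4 * 2 ^ t) + (codeKey (2 ^ t) + codeKey (2 ^ t)) := by
  rw [← codeKey_four_mul, show 4 * 2 ^ t = 2 ^ (t + 2) by ring, ← codeKey_add_two_pow,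
    Nat.sub_add_cancel] <;> rw [show 2 ^ (t + 2) = 4 * 2 ^ t by ring] <;> omega

lemma codeKey_add_four_mul_lt_of_lt_sub {t x y : ℕ} (hx : 4 * 2 ^ t ≤ x) (hx' : x < 8 * 2 ^ t)
    (h : codeKey y < codeKey (x - 4 * 2 ^ t)) : codeKey (y + 4 * 2 ^ t) < codeKey x :=
  calc codeKey (y + 4 * 2 ^ t) ≤ codeKey y + (codeKey (2 ^ t) + codeKey (2 ^ t)) := by
        rw [← codeKey_four_mul, show 4 * 2 ^ t = 2 ^ (t + 2) by ring]
        exact codeKey_add_two_pow_le _ _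
    _ < codeKey (x - 4 * 2 ^ t) + (codeKey (2 ^ t) + codeKey (2 ^ t)) := by gcongr
    _ = codeKey x := (codeKey_eq_sub_add hx hx').symm

lemma codeKey_add_two_pow_lt_of_lt_sub {t x y : ℕ} (hx : 4 * 2 ^ t ≤ x) (hx' : x < 8 * 2 ^ t)
    (h : codeKey y < codeKey (x - 3 * 2 ^ t)) : codeKey (y + 2 ^ t) < codeKey x :=
  calc codeKey (y + 2 ^ t) ≤ codeKey y + codeKey (2 ^ t) := codeKey_add_two_pow_le _ _
    _ < codeKey (x - 4 * 2 ^ t + 2 ^ t) + codeKey (2 ^ t) := by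
        rw [show x - 4 * 2 ^ t + 2 ^ t = x - 3 * 2 ^ t by omega]; gcongr
    _ ≤ codeKey (x - 4 * 2 ^ t) + codeKey (2 ^ t) + codeKey (2 ^ t) := by
        gcongr; exact codeKey_add_two_pow_le _ _
    _ = codeKey x := by rw [codeKey_eq_sub_add hx hx', add_assoc]

def SatisfiesRecurrence {R : Type*} [Semiring R] (A : ℕ → R) (x : R) (s : ℕ) : Prop :=
  ∀ n, Odd n → A (n + 8 * s) = x ^ (8 * s) * A n + x ^ (2 * s) * A (n + 2 * s)

lemma SatisfiesRecurrence.two_mul {R : Type*} [CommRing R] [CharP R 2] {A : ℕ → R} {x : R}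
    {s : ℕ} (h : SatisfiesRecurrence A x s) : SatisfiesRecurrence A x (2 * s) := by
  intro n hn
  have h₀ := h n hn
  have h₂ := h (n + 2 * s) (hn.add_even (even_two_mul s))
  have h₈ := h (n + 8 * s) (hn.add_even ⟨4 * s, by ring⟩)
  rw [show n + 8 * s + 8 * s = n + 8 * (2 * s) by ring,
    show n + 8 * s + 2 * s = n + 2 * s + 8 * s by ring] at h₈
  rw [show n + 2 * s + 2 * s = n + 2 * (2 * s) by ring] at h₂
  -- the two cross terms `x ^ (10 * s) * A (n + 2 * s)` cancel in characteristic 2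
  linear_combination h₈ + x ^ (8 * s) * h₀ + x ^ (2 * s) * h₂ +
    x ^ (10 * s) * A (n + 2 * s) * CharTwo.two_eq_zero (R := R)

lemma SatisfiesRecurrence.two_pow_mul {R : Type*} [CommRing R] [CharP R 2] {A : ℕ → R} {x : R}
    {s : ℕ} (h : SatisfiesRecurrence A x s) (k : ℕ) : SatisfiesRecurrence A x (2 ^ k * s) := by
  induction k with
  | zero => simpa using h
  | succ k ih => simpa only [pow_succ, mul_comm _ 2, mul_assoc] using ih.two_mul

def MonomialsPrecede {R : Type*} [Semiring R] (A : ℕ → R[X]) (n : ℕ) : Prop :=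
  ∀ m, (A n).coeff m ≠ 0 → codeKey (m / 2) < codeKey (n / 2)

lemma MonomialsPrecede.of_eq_X_pow_mul_add {R : Type*} [Semiring R] {A : ℕ → R[X]} {n t : ℕ}
    (hlo : 8 * 2 ^ t ≤ n) (hhi : n < 16 * 2 ^ t)
    (hA : A n = X ^ (8 * 2 ^ t) * A (n - 8 * 2 ^ t) + X ^ (2 * 2 ^ t) * A (n - 6 * 2 ^ t))
    (h₀ : MonomialsPrecede A (n - 8 * 2 ^ t)) (h₁ : MonomialsPrecede A (n - 6 * 2 ^ t)) :
    MonomialsPrecede A n := by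
  intro m hm
  rw [hA, coeff_add, coeff_X_pow_mul', coeff_X_pow_mul'] at hm
  have hx : 4 * 2 ^ t ≤ n / 2 := by omega
  have hx' : n / 2 < 8 * 2 ^ t := by omega
  obtain ⟨hle, hm₀⟩ | ⟨hle, hm₁⟩ :
      (8 * 2 ^ t ≤ m ∧ (A (n - 8 * 2 ^ t)).coeff (m - 8 * 2 ^ t) ≠ 0) ∨
        (2 * 2 ^ t ≤ m ∧ (A (n - 6 * 2 ^ t)).coeff (m - 2 * 2 ^ t) ≠ 0) := by
    by_contra! h
    split_ifs at hm <;> simp_all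
  · have := codeKey_add_four_mul_lt_of_lt_sub hx hx' (y := m / 2 - 4 * 2 ^ t)
      (by rw [show n / 2 - 4 * 2 ^ t = (n - 8 * 2 ^ t) / 2 by omega,
        show m / 2 - 4 * 2 ^ t = (m - 8 * 2 ^ t) / 2 by omega]; exact h₀ _ hm₀)
    rwa [Nat.sub_add_cancel (by omega)] at this
  · have := codeKey_add_two_pow_lt_of_lt_sub hx hx' (y := m / 2 - 2 ^ t)
      (by rw [show n / 2 - 3 * 2 ^ t = (n - 6 * 2 ^ t) / 2 by omega,
        show m / 2 - 2 ^ t = (m - 2 * 2 ^ t) / 2 by omega]; exact h₁ _ hm₁)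
    rwa [Nat.sub_add_cancel (by omega)] at this

lemma exists_eight_mul_two_pow_le_lt {e n : ℕ} (h : 8 * 2 ^ e ≤ n) :
    ∃ t, e ≤ t ∧ 8 * 2 ^ t ≤ n ∧ n < 16 * 2 ^ t := by
  have hn : n ≠ 0 := by have := Nat.one_le_two_pow (n := e); omega
  have hlog : e + 3 ≤ Nat.log 2 n :=
    Nat.le_log_of_pow_le one_lt_two (by rw [pow_add]; omega)
  refine ⟨Nat.log 2 n - 3, by omega, ?_, ?_⟩
  · have := Nat.pow_log_le_self 2 hn
    rwa [← Nat.sub_add_cancel (by omega : 3 ≤ Nat.log 2 n), pow_add, mul_comm] at this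
  · have := Nat.lt_pow_succ_log_self one_lt_two n
    rwa [Nat.succ_eq_add_one, ← Nat.sub_add_cancel (by omega : 3 ≤ Nat.log 2 n), add_assoc,
      pow_add, mul_comm] at this

theorem monomialsPrecede_of_satisfiesRecurrence {R : Type*} [CommRing R] [CharP R 2]
    {A : ℕ → R[X]} {e : ℕ} (hrec : SatisfiesRecurrence A X (2 ^ e))
    (hinit : ∀ n, Odd n → n < 8 * 2 ^ e → MonomialsPrecede A n) :
    ∀ n, Odd n → MonomialsPrecede A n := by
  intro n
  induction n using Nat.strong_induction_on with
  | _ n ih =>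
    intro hn
    by_cases hsmall : n < 8 * 2 ^ e
    · exact hinit n hn hsmall
    obtain ⟨t, het, hlo, hhi⟩ := exists_eight_mul_two_pow_le_lt (not_lt.1 hsmall)
    have hn₂ := Nat.odd_iff.1 hn
    have hodd₀ : Odd (n - 8 * 2 ^ t) := Nat.odd_iff.2 (by omega)
    have hodd₁ : Odd (n - 6 * 2 ^ t) := Nat.odd_iff.2 (by omega)
    have hA := hrec.two_pow_mul (t - e) _ hodd₀
    rw [← pow_add, Nat.sub_add_cancel het, Nat.sub_add_cancel hlo,
      show n - 8 * 2 ^ t + 2 * 2 ^ t = n - 6 * 2 ^ t by omega] at hA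
    exact .of_eq_X_pow_mul_add hlo hhi hA (ih _ (by omega) hodd₀) (ih _ (by omega) hodd₁)

lemma exists_eq_one_add_spread {n : ℕ} (hn : Odd n) :
    ∃ a b, n = 1 + 2 * spread a + 4 * spread b := by
  have h := spread_unspread_add_two_mul_spread_unspread (n / 2)
  exact ⟨unspread (n / 2), unspread (n / 2 / 2), by have := Nat.odd_iff.1 hn; omega⟩

lemma exists_spread_prec_iff {m : ℕ} (hm : Odd m) (a b : ℕ) :
    (∃ c d, m = 1 + 2 * spread c + 4 * spread d ∧ prec c d a b) ↔
      codeKey (m / 2) < codeKey (spread a + 2 * spread b) := by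
  rw [← prec_iff_codeKey_lt, unspread_spread_add_two_mul_spread,
    unspread_half_spread_add_two_mul_spread]
  constructor
  · rintro ⟨c, d, rfl, h⟩
    rwa [show (1 + 2 * spread c + 4 * spread d) / 2 = spread c + 2 * spread d by omega,
      unspread_spread_add_two_mul_spread, unspread_half_spread_add_two_mul_spread]
  · intro h
    have := spread_unspread_add_two_mul_spread_unspread (m / 2)
    exact ⟨unspread (m / 2), unspread (m / 2 / 2), by have := Nat.odd_iff.1 hm; omega, h⟩

end NicolasSerre

open NicolasSerre in
theorem stmt_9 (g : ℕ → ℕ) (hg0 : g 0 = 0)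
    (hge : ∀ n, g (2 * n) = 4 * g n)
    (hgo : ∀ n, g (2 * n + 1) = g (2 * n) + 1)
    (r : ℕ) (hr : ∃ e : ℕ, r = 2 ^ e)
    (A : ℕ → Polynomial (ZMod 2))
    (hodd : ∀ n, Odd n → ∀ m, (A n).coeff m ≠ 0 → Odd m)
    (hrec : ∀ n, Odd n → A (n + 8 * r) = X ^ (8 * r) * A n + X ^ (2 * r) * A (n + 2 * r))
    (hinit : ∀ n, Odd n → n < 8 * r ^ 2 → ∀ a b, n = 1 + 2 * g a + 4 * g b →
      ∀ m, (A n).coeff m ≠ 0 → ∃ c d, m = 1 + 2 * g c + 4 * g d ∧ prec c d a b) :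
    ∀ n, Odd n → 0 < n → ∀ a b, n = 1 + 2 * g a + 4 * g b →
      ∀ m, (A n).coeff m ≠ 0 → ∃ c d, m = 1 + 2 * g c + 4 * g d ∧ prec c d a b := by
  obtain rfl := eq_spread hg0 hge hgo
  obtain ⟨e, rfl⟩ := hr
  have hsmall : ∀ n, Odd n → n < 8 * 2 ^ e → MonomialsPrecede A n := by
    intro n hn hlt m hm
    replace hlt : n < 8 * (2 ^ e) ^ 2 := by nlinarith [Nat.one_le_two_pow (n := e)]
    obtain ⟨a, b, rfl⟩ := exists_eq_one_add_spread hn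
    have := hinit _ hn hlt a b rfl m hm
    rwa [exists_spread_prec_iff (hodd _ hn m hm),
      ← show (1 + 2 * spread a + 4 * spread b) / 2 = spread a + 2 * spread b by omega] at this
  rintro n hn - a b rfl m hm
  rw [exists_spread_prec_iff (hodd _ hn m hm),
    ← show (1 + 2 * spread a + 4 * spread b) / 2 = spread a + 2 * spread b by omega]
  exact monomialsPrecede_of_satisfiesRecurrence hrec hsmall _ hn m hm
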